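/- The sequential privacy mechanism is faithful and private, and its rate satisfies 1 − (1/n)∑_{i=1}^{n} P(Y_i = ∗) = (1/n) ∑_{i=1}^{n} ∑_{a∈𝒳} ∑_{y_{[i−1]}} P(Y_{[i−1]} = y_{[i−1]}) · min_{u} P(X_i = a | X_K = u, Y_{[i−1]} = y_{[i−1]}), where the inner sum is over histories y_{[i−1]} occurring with positive probability and the minimum is over u ∈ 𝒳^{|K|} with P(X_K = u, Y_{[i−1]} = y_{[i−1]}) > 0. Consequently, every rate R not exceeding this quantity is achievable. -/

import Mathlib

open Finset
open scoped Classical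

noncomputable section

namespace GenotypeHiding

variable {X : Type} [Fintype X] [DecidableEq X]

/-- Restriction of a sequence `x` to the sensitive positions `K`. -/
def restr {n : ℕ} (K : Finset (Fin n)) (x : Fin n → X) : ↥K → X := fun i => x (i : Fin n)

/-- `y` agrees with the history `h` on all coordinates `j` with `j < t`
(i.e. the event `Y_{[t]} = h_{[t]}`, zero-based). -/
def agreeN {n : ℕ} (t : ℕ) (y h : Fin n → Option X) : Prop :=
  ∀ j : Fin n, (j : ℕ) < t → y j = h j

/-- `P(X = x, Y_{[t]} = h_{[t]})` under the joint law `J` of `(X, Y)`. -/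
def prXH {n : ℕ} (J : (Fin n → X) → (Fin n → Option X) → ℝ) (t : ℕ)
    (x : Fin n → X) (h : Fin n → Option X) : ℝ :=
  ∑ y : Fin n → Option X, if agreeN t y h then J x y else 0

/-- `P(Y_i = b, X = x, Y_{[t]} = h_{[t]})` under the joint law `J`. -/
def prXHY {n : ℕ} (J : (Fin n → X) → (Fin n → Option X) → ℝ) (t : ℕ)
    (x : Fin n → X) (h : Fin n → Option X) (i : Fin n) (b : Option X) : ℝ :=
  ∑ y : Fin n → Option X, if y i = b ∧ agreeN t y h then J x y else 0

/-- `P(Y_{[t]} = h_{[t]})` under the joint law `J`. -/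
def prH {n : ℕ} (J : (Fin n → X) → (Fin n → Option X) → ℝ) (t : ℕ)
    (h : Fin n → Option X) : ℝ :=
  ∑ x : Fin n → X, prXH J t x h

/-- `P(X_K = u, Y_{[t]} = h_{[t]})` under the joint law `J`. -/
def prKH {n : ℕ} (J : (Fin n → X) → (Fin n → Option X) → ℝ) (K : Finset (Fin n))
    (t : ℕ) (u : ↥K → X) (h : Fin n → Option X) : ℝ :=
  ∑ x : Fin n → X, ∑ y : Fin n → Option X,
    if restr K x = u ∧ agreeN t y h then J x y else 0

/-- `P(X_i = a, X_K = u, Y_{[t]} = h_{[t]})` under the joint law `J`. -/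
def prIKH {n : ℕ} (J : (Fin n → X) → (Fin n → Option X) → ℝ) (K : Finset (Fin n))
    (t : ℕ) (i : Fin n) (a : X) (u : ↥K → X) (h : Fin n → Option X) : ℝ :=
  ∑ x : Fin n → X, ∑ y : Fin n → Option X,
    if x i = a ∧ restr K x = u ∧ agreeN t y h then J x y else 0

/-- `P(Y_i = b, X_K = u, Y_{[t]} = h_{[t]})` under the joint law `J`. -/
def prYKH {n : ℕ} (J : (Fin n → X) → (Fin n → Option X) → ℝ) (K : Finset (Fin n))
    (t : ℕ) (i : Fin n) (b : Option X) (u : ↥K → X) (h : Fin n → Option X) : ℝ :=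
  ∑ x : Fin n → X, ∑ y : Fin n → Option X,
    if y i = b ∧ restr K x = u ∧ agreeN t y h then J x y else 0

/-- `P(X_i = a | X_K = u, Y_{[t]} = h_{[t]})` under the joint law `J`. -/
def condX {n : ℕ} (J : (Fin n → X) → (Fin n → Option X) → ℝ) (K : Finset (Fin n))
    (t : ℕ) (i : Fin n) (a : X) (u : ↥K → X) (h : Fin n → Option X) : ℝ :=
  prIKH J K t i a u h / prKH J K t u h

/-- `min_u P(X_i = a | X_K = u, Y_{[t]} = h_{[t]})`, the minimum being over all `u` with
`P(X_K = u, Y_{[t]} = h_{[t]}) > 0`. -/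
def minC {n : ℕ} (J : (Fin n → X) → (Fin n → Option X) → ℝ) (K : Finset (Fin n))
    (t : ℕ) (i : Fin n) (a : X) (h : Fin n → Option X) : ℝ :=
  sInf {r : ℝ | ∃ u : ↥K → X, 0 < prKH J K t u h ∧ r = condX J K t i a u h}

/-- `J` is the joint law of `(X, Y)` where `Y` is generated from `X ∼ p` by the sequential
privacy mechanism: `Y_i ∈ {X_i, ∗}`, and conditionally on `X = x` and the previously
generated outputs `Y_{[i-1]} = y_{[i-1]}`, the mechanism releases `Y_i = x_i` with
probability `min_u P(X_i = x_i | X_K = u, Y_{[i-1]}) / P(X_i = x_i | X_K = x_K, Y_{[i-1]})`,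
and erases (`Y_i = ∗`) with the complementary probability. -/
def IsSequentialMechanism {n : ℕ} (p : (Fin n → X) → ℝ) (K : Finset (Fin n))
    (J : (Fin n → X) → (Fin n → Option X) → ℝ) : Prop :=
  (∀ x y, 0 ≤ J x y) ∧
  (∀ x, ∑ y : Fin n → Option X, J x y = p x) ∧
  (∀ x y, 0 < J x y → ∀ i : Fin n, y i = some (x i) ∨ y i = none) ∧
  (∀ (i : Fin n) (x : Fin n → X) (h : Fin n → Option X), 0 < prXH J (i : ℕ) x h →
    prXHY J (i : ℕ) x h i (some (x i))
      = (minC J K (i : ℕ) i (x i) h / condX J K (i : ℕ) i (x i) (restr K x) h)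
          * prXH J (i : ℕ) x h)


/-- Number of erasures `e(y) = #{i : y_i = ∗}` in an output sequence. -/
def numErasures {n : ℕ} (y : Fin n → Option X) : ℕ :=
  (Finset.univ.filter (fun i : Fin n => y i = none)).card

end GenotypeHiding

/-!
Given the history `Y_{[i]} = h`, the mechanism releases `X_i = a` with probability
`minC(a, h) / P(X_i = a | X_K = x_K, h)`. Since faithfulness forces `X_i = a` on `Y_i = a`, this
gives `P(Y_i = a, X_K = u, h) = minC(a, h) · P(X_K = u, h)`, and hence
`P(Y_i = ∗, X_K = u, h) = (1 - ∑ₐ minC(a, h)) · P(X_K = u, h)`: each new output multiplies the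
joint law of `(X_K, Y_{[i]})` by a factor independent of `X_K`. By induction this law factorizes,
which at `i = n` is privacy. Averaging the first identity over the history (tower property) gives
`P(Y_i = a) = 𝔼[minC(a, Y_{[i]})]`, the rate identity; and `J / p` is a faithful private
mechanism with exactly this rate.
-/

namespace GenotypeHiding

variable {X : Type} {n : ℕ}

theorem exists_condKernel_of_joint {α β : Type*} [Fintype β] (J : α → β → ℝ)
    (hJ0 : ∀ a b, 0 ≤ J a b) (b₀ : β) :
    ∃ w : α → β → ℝ, (∀ a b, 0 ≤ w a b) ∧ (∀ a, ∑ b, w a b = 1) ∧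
      (∀ a b, (∑ b', J a b') * w a b = J a b) ∧ (∀ a b, 0 < w a b → 0 < J a b ∨ b = b₀) := by
  have hS0 : ∀ a, 0 ≤ ∑ b, J a b := fun a => sum_nonneg fun b _ => hJ0 a b
  have hJ_eq_zero : ∀ a b, ∑ b', J a b' = 0 → J a b = 0 := fun a b hS =>
    (sum_eq_zero_iff_of_nonneg fun b _ => hJ0 a b).mp hS b (mem_univ b)
  refine ⟨fun a b => if ∑ b', J a b' = 0 then (if b = b₀ then 1 else 0) else J a b / ∑ b', J a b',
    fun a b => ?_, fun a => ?_, fun a b => ?_, fun a b hw => ?_⟩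
  · dsimp only
    split_ifs
    exacts [zero_le_one, le_rfl, div_nonneg (hJ0 a b) (hS0 a)]
  · dsimp only
    split_ifs with hS
    · simp
    · rw [← sum_div, div_self hS]
  · by_cases hS : ∑ b', J a b' = 0
    · simp only [hS, if_true, zero_mul, hJ_eq_zero a b hS]
    · simp only [hS, if_false, mul_div_cancel₀ _ hS]
  · dsimp only at hw
    split_ifs at hw with hS hb
    · exact Or.inr hb
    · exact absurd hw (lt_irrefl 0)
    · exact Or.inl ((div_pos_iff_of_pos_right ((hS0 a).lt_of_ne' hS)).mp hw)

section Prefix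

theorem agreeN_iff_of_agreeN {t : ℕ} {h₁ h₂ : Fin n → Option X} (hh : agreeN t h₁ h₂)
    (y : Fin n → Option X) : agreeN t y h₁ ↔ agreeN t y h₂ :=
  ⟨fun hy j hj => (hy j hj).trans (hh j hj), fun hy j hj => (hy j hj).trans (hh j hj).symm⟩

theorem agreeN_zero (y h : Fin n → Option X) : agreeN 0 y h :=
  fun _ hj => absurd hj (Nat.not_lt_zero _)

theorem agreeN_length_iff (y h : Fin n → Option X) : agreeN n y h ↔ y = h :=
  ⟨fun hyh => funext fun j => hyh j j.isLt, fun hyh _ _ => hyh ▸ rfl⟩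

theorem agreeN_succ_iff (i : Fin n) (y h : Fin n → Option X) :
    agreeN ((i : ℕ) + 1) y h ↔ y i = h i ∧ agreeN i y h := by
  refine ⟨fun hyh => ⟨hyh i (Nat.lt_succ_self _), fun j hj => hyh j (by omega)⟩, ?_⟩
  rintro ⟨hi, hyh⟩ j hj
  rcases Nat.lt_succ_iff_lt_or_eq.mp hj with hj | hj
  · exact hyh j hj
  · exact Fin.ext hj ▸ hi

/-- The canonical representative of the class of `y` under `agreeN t`. -/
def pad (t : ℕ) (y : Fin n → Option X) : Fin n → Option X :=
  fun j => if (j : ℕ) < t then y j else none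

theorem pad_eq_iff (t : ℕ) (y h : Fin n → Option X) :
    pad t y = h ↔ pad t h = h ∧ agreeN t y h := by
  constructor
  · rintro rfl
    refine ⟨funext fun j => ?_, fun j hj => by simp [pad, hj]⟩
    by_cases hj : (j : ℕ) < t <;> simp [pad, hj]
  · rintro ⟨hh, hyh⟩
    refine (funext fun j => ?_).trans hh
    by_cases hj : (j : ℕ) < t <;> simp [pad, hj, hyh j]

end Prefix

section Events

variable [Fintype X]

def prob (J : (Fin n → X) → (Fin n → Option X) → ℝ)
    (E : (Fin n → X) → (Fin n → Option X) → Prop) : ℝ :=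
  ∑ x : Fin n → X, ∑ y : Fin n → Option X, if E x y then J x y else 0

variable {J : (Fin n → X) → (Fin n → Option X) → ℝ}

theorem prob_eq_sum_ite (E : (Fin n → X) → (Fin n → Option X) → Prop)
    [∀ x y, Decidable (E x y)] :
    prob J E = ∑ x : Fin n → X, ∑ y : Fin n → Option X, if E x y then J x y else 0 := by
  unfold prob; congr!

theorem prob_nonneg (hJ0 : ∀ x y, 0 ≤ J x y) (E : (Fin n → X) → (Fin n → Option X) → Prop) :
    0 ≤ prob J E :=
  sum_nonneg fun x _ => sum_nonneg fun y _ => by split_ifs <;> simp [hJ0 x y]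

theorem prob_mono (hJ0 : ∀ x y, 0 ≤ J x y) {E F : (Fin n → X) → (Fin n → Option X) → Prop}
    (hEF : ∀ x y, E x y → F x y) : prob J E ≤ prob J F :=
  sum_le_sum fun x _ => sum_le_sum fun y _ => by
    by_cases hE : E x y
    · simp [hE, hEF x y hE]
    · by_cases hF : F x y <;> simp [hE, hF, hJ0 x y]

theorem prob_congr {E F : (Fin n → X) → (Fin n → Option X) → Prop}
    (hEF : ∀ x y, J x y ≠ 0 → (E x y ↔ F x y)) : prob J E = prob J F :=
  sum_congr rfl fun x _ => sum_congr rfl fun y _ => by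
    by_cases hJ : J x y = 0
    · simp [hJ]
    · simp only [hEF x y hJ]

theorem sum_prob_eq_and {ι : Type*} [Fintype ι] (g : (Fin n → X) → (Fin n → Option X) → ι)
    (E : (Fin n → X) → (Fin n → Option X) → Prop) :
    ∑ u : ι, prob J (fun x y => g x y = u ∧ E x y) = prob J E := by
  unfold prob
  rw [sum_comm]
  refine sum_congr rfl fun x _ => ?_
  rw [sum_comm]
  refine sum_congr rfl fun y _ => ?_
  by_cases hE : E x y <;> simp [hE]

theorem prob_and_left (P : (Fin n → X) → Prop) [DecidablePred P]
    (E : (Fin n → X) → (Fin n → Option X) → Prop) :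
    prob J (fun x y => P x ∧ E x y)
      = ∑ x : Fin n → X, if P x then ∑ y : Fin n → Option X, (if E x y then J x y else 0)
          else 0 := by
  unfold prob
  refine sum_congr rfl fun x _ => ?_
  by_cases hP : P x <;> simp [hP]

theorem sum_mul_numErasures (J : (Fin n → X) → (Fin n → Option X) → ℝ) :
    ∑ x : Fin n → X, ∑ y : Fin n → Option X, J x y * (numErasures y : ℝ)
      = ∑ i : Fin n, prob J (fun _ y => y i = none) := by
  unfold prob
  conv_rhs => rw [sum_comm]
  refine sum_congr rfl fun x _ => ?_
  conv_rhs => rw [sum_comm]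
  refine sum_congr rfl fun y _ => ?_
  rw [numErasures, card_filter, Nat.cast_sum, mul_sum]
  refine sum_congr rfl fun i _ => ?_
  split_ifs <;> simp

theorem sum_eq_sum_pad (t : ℕ) (φ : (Fin n → Option X) → ℝ) :
    ∑ y : Fin n → Option X, φ y
      = ∑ h : Fin n → Option X,
          if pad t h = h then ∑ y : Fin n → Option X, (if agreeN t y h then φ y else 0) else 0 := by
  calc ∑ y : Fin n → Option X, φ y
      = ∑ y : Fin n → Option X, ∑ h : Fin n → Option X, if pad t y = h then φ y else 0 := by
        simp
    _ = _ := by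
      rw [sum_comm]
      refine sum_congr rfl fun h _ => ?_
      by_cases hh : pad t h = h <;> simp [pad_eq_iff, hh]

/-- Tower property: if `E` has probability `G h` given `Y_{[t]} = h_{[t]}`, for a `G` that only
depends on the first `t` outputs, then `P(E) = 𝔼[G(Y)]`. -/
theorem prob_eq_sum_mul_of_agreeN {t : ℕ} (E : (Fin n → X) → (Fin n → Option X) → Prop)
    (G : (Fin n → Option X) → ℝ) (hG : ∀ y h, agreeN t y h → G y = G h)
    (hE : ∀ h, prob J (fun x y => E x y ∧ agreeN t y h)
      = G h * prob J (fun _ y => agreeN t y h)) :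
    prob J E = ∑ x : Fin n → X, ∑ y : Fin n → Option X, J x y * G y := by
  have by_prefix : ∀ Φ : (Fin n → X) → (Fin n → Option X) → ℝ,
      ∑ x : Fin n → X, ∑ y : Fin n → Option X, Φ x y
        = ∑ h : Fin n → Option X, if pad t h = h then
            ∑ x : Fin n → X, ∑ y : Fin n → Option X, (if agreeN t y h then Φ x y else 0)
          else 0 := by
    intro Φ
    rw [sum_congr rfl fun x _ => sum_eq_sum_pad t (Φ x), sum_comm]
    exact sum_congr rfl fun h _ => by split_ifs <;> simp
  rw [prob, by_prefix, by_prefix]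
  refine sum_congr rfl fun h _ => if_congr Iff.rfl ?_ rfl
  calc ∑ x : Fin n → X, ∑ y : Fin n → Option X,
        (if agreeN t y h then (if E x y then J x y else 0) else 0)
      = prob J (fun x y => E x y ∧ agreeN t y h) := by
        refine sum_congr rfl fun x _ => sum_congr rfl fun y _ => ?_
        by_cases hy : agreeN t y h <;> simp [hy]
    _ = G h * prob J (fun _ y => agreeN t y h) := hE h
    _ = _ := by
      rw [prob, mul_sum]
      refine sum_congr rfl fun x _ => ?_
      rw [mul_sum]
      refine sum_congr rfl fun y _ => ?_
      by_cases hy : agreeN t y h <;> simp [hy, hG y h, mul_comm]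

theorem prXH_eq_prob (t : ℕ) (x : Fin n → X) (h : Fin n → Option X) :
    prXH J t x h = prob J (fun x' y => x' = x ∧ agreeN t y h) := by
  rw [prob_and_left, Fintype.sum_eq_single x fun x' hx' => by simp [hx']]
  simp [prXH]

theorem prXH_zero (x : Fin n → X) (h : Fin n → Option X) :
    prXH J 0 x h = ∑ y : Fin n → Option X, J x y := by
  simp [prXH, agreeN_zero]

theorem prXH_length (x : Fin n → X) (h : Fin n → Option X) : prXH J n x h = J x h := by
  simp [prXH, agreeN_length_iff]

theorem prH_eq_prob (t : ℕ) (h : Fin n → Option X) :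
    prH J t h = prob J (fun _ y => agreeN t y h) := by
  unfold prH prXH prob; congr!

end Events

section Mechanism

variable [Fintype X] [DecidableEq X] {J : (Fin n → X) → (Fin n → Option X) → ℝ}
  {K : Finset (Fin n)}

theorem prXHY_eq_prob (t : ℕ) (x : Fin n → X) (h : Fin n → Option X) (i : Fin n)
    (b : Option X) : prXHY J t x h i b = prob J (fun x' y => x' = x ∧ y i = b ∧ agreeN t y h) := by
  rw [prob_and_left, Fintype.sum_eq_single x fun x' hx' => by simp [hx']]
  simp only [prXHY, if_true]
  congr!

theorem prKH_eq_prob (t : ℕ) (u : ↥K → X) (h : Fin n → Option X) :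
    prKH J K t u h = prob J (fun x y => restr K x = u ∧ agreeN t y h) := by
  unfold prKH prob; congr!

theorem prIKH_eq_prob (t : ℕ) (i : Fin n) (a : X) (u : ↥K → X) (h : Fin n → Option X) :
    prIKH J K t i a u h = prob J (fun x y => x i = a ∧ restr K x = u ∧ agreeN t y h) := by
  unfold prIKH prob; congr!

theorem prYKH_eq_prob (t : ℕ) (i : Fin n) (b : Option X) (u : ↥K → X) (h : Fin n → Option X) :
    prYKH J K t i b u h = prob J (fun x y => y i = b ∧ restr K x = u ∧ agreeN t y h) := by
  unfold prYKH prob; congr!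

theorem prKH_eq_sum_prXH (t : ℕ) (u : ↥K → X) (h : Fin n → Option X) :
    prKH J K t u h = ∑ x : Fin n → X, if restr K x = u then prXH J t x h else 0 := by
  rw [prKH_eq_prob, prob_and_left]
  rfl

theorem sum_prKH (t : ℕ) (h : Fin n → Option X) :
    ∑ u : ↥K → X, prKH J K t u h = prH J t h := by
  simp only [prKH_eq_prob, prH_eq_prob]
  exact sum_prob_eq_and (fun x _ => restr K x) _

theorem sum_prYKH (t : ℕ) (i : Fin n) (u : ↥K → X) (h : Fin n → Option X) :
    ∑ b : Option X, prYKH J K t i b u h = prKH J K t u h := by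
  simp only [prYKH_eq_prob, prKH_eq_prob]
  exact sum_prob_eq_and (fun _ y => y i) _

theorem condX_nonneg (hJ0 : ∀ x y, 0 ≤ J x y) (t : ℕ) (i : Fin n) (a : X) (u : ↥K → X)
    (h : Fin n → Option X) : 0 ≤ condX J K t i a u h := by
  rw [condX, prIKH_eq_prob, prKH_eq_prob]
  exact div_nonneg (prob_nonneg hJ0 _) (prob_nonneg hJ0 _)

theorem minC_nonneg (hJ0 : ∀ x y, 0 ≤ J x y) (t : ℕ) (i : Fin n) (a : X)
    (h : Fin n → Option X) : 0 ≤ minC J K t i a h := by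
  rcases Set.eq_empty_or_nonempty
    {r : ℝ | ∃ u : ↥K → X, 0 < prKH J K t u h ∧ r = condX J K t i a u h} with hS | hS
  · rw [minC, hS, Real.sInf_empty]
  · exact le_csInf hS fun r ⟨u, _, hr⟩ => hr ▸ condX_nonneg hJ0 t i a u h

theorem minC_le_condX (hJ0 : ∀ x y, 0 ≤ J x y) {t : ℕ} {i : Fin n} {a : X} {u : ↥K → X}
    {h : Fin n → Option X} (hu : 0 < prKH J K t u h) :
    minC J K t i a h ≤ condX J K t i a u h :=
  csInf_le ⟨0, fun _ ⟨u', _, hr⟩ => hr ▸ condX_nonneg hJ0 t i a u' h⟩ ⟨u, hu, rfl⟩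

theorem minC_congr {t : ℕ} {h₁ h₂ : Fin n → Option X} (hh : agreeN t h₁ h₂) (i : Fin n)
    (a : X) : minC J K t i a h₁ = minC J K t i a h₂ := by
  simp only [minC, condX, prKH_eq_prob, prIKH_eq_prob, agreeN_iff_of_agreeN hh]

/-- If `prIKH = 0`, then `condX` takes the junk value `0`, and either `prKH = 0` or
`minC ≤ condX = 0`: both sides vanish. -/
theorem minC_div_condX_mul_prIKH (hJ0 : ∀ x y, 0 ≤ J x y) (t : ℕ) (i : Fin n) (a : X)
    (u : ↥K → X) (h : Fin n → Option X) :
    minC J K t i a h / condX J K t i a u h * prIKH J K t i a u h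
      = minC J K t i a h * prKH J K t u h := by
  have hIK : prIKH J K t i a u h ≤ prKH J K t u h := by
    rw [prIKH_eq_prob, prKH_eq_prob]; exact prob_mono hJ0 fun _ _ hxy => hxy.2
  have hI0 : 0 ≤ prIKH J K t i a u h := by rw [prIKH_eq_prob]; exact prob_nonneg hJ0 _
  rcases hI0.eq_or_lt with hI | hI
  · rcases (hI0.trans hIK).eq_or_lt with hK | hK
    · rw [← hI, ← hK, mul_zero, mul_zero]
    · have hm : minC J K t i a h = 0 := le_antisymm
        ((minC_le_condX hJ0 hK).trans_eq (by rw [condX, ← hI, zero_div]))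
        (minC_nonneg hJ0 t i a h)
      rw [hm, zero_div, zero_mul, zero_mul]
  · rw [condX]
    field_simp

end Mechanism

namespace IsSequentialMechanism

variable [Fintype X] [DecidableEq X] {p : (Fin n → X) → ℝ} {K : Finset (Fin n)}
  {J : (Fin n → X) → (Fin n → Option X) → ℝ}

theorem prXHY_eq (hJ : IsSequentialMechanism p K J) (i : Fin n) (x : Fin n → X)
    (h : Fin n → Option X) :
    prXHY J i x h i (some (x i))
      = minC J K i i (x i) h / condX J K i i (x i) (restr K x) h * prXH J i x h := by
  obtain ⟨hJ0, -, -, hmech⟩ := hJ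
  by_cases hpos : 0 < prXH J i x h
  · exact hmech i x h hpos
  have h0 : prXH J i x h = 0 :=
    le_antisymm (not_lt.mp hpos) (by rw [prXH_eq_prob]; exact prob_nonneg hJ0 _)
  have hle : prXHY J i x h i (some (x i)) ≤ prXH J i x h := by
    rw [prXHY_eq_prob, prXH_eq_prob]; exact prob_mono hJ0 fun _ _ hxy => ⟨hxy.1, hxy.2.2⟩
  have hnn : 0 ≤ prXHY J i x h i (some (x i)) := by
    rw [prXHY_eq_prob]; exact prob_nonneg hJ0 _
  rw [h0, mul_zero]
  linarith

/-- Faithfulness makes `Y_i = a` force `X_i = a`; summing the release equation of the mechanism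
over the `x` with `x_i = a` and `x_K = u`, the factor `1 / condX` cancels against `prIKH`. -/
theorem prYKH_some (hJ : IsSequentialMechanism p K J) (i : Fin n) (a : X) (u : ↥K → X)
    (h : Fin n → Option X) :
    prYKH J K i i (some a) u h = minC J K i i a h * prKH J K i u h := by
  obtain ⟨hJ0, -, hfaith, -⟩ := id hJ
  have hsplit : prYKH J K i i (some a) u h = ∑ x : Fin n → X,
      if x i = a ∧ restr K x = u then prXHY J i x h i (some (x i)) else 0 := by
    rw [prYKH_eq_prob, prob_congr (E := fun x y => y i = some a ∧ restr K x = u ∧ agreeN i y h)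
      (F := fun x y => (x i = a ∧ restr K x = u) ∧ (y i = some (x i) ∧ agreeN i y h)),
      prob_and_left]
    · unfold prXHY; congr!
    · intro x y hxy
      rcases hfaith x y (lt_of_le_of_ne (hJ0 x y) (Ne.symm hxy)) i with hy | hy
      · simp only [hy, Option.some.injEq, true_and]
        tauto
      · simp [hy]
  have hI : prIKH J K i i a u h
      = ∑ x : Fin n → X, if x i = a ∧ restr K x = u then prXH J i x h else 0 := by
    rw [prIKH_eq_prob, prob_congr (F := fun x y => (x i = a ∧ restr K x = u) ∧ agreeN i y h)
      fun _ _ _ => and_assoc.symm, prob_and_left]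
    rfl
  rw [hsplit, ← minC_div_condX_mul_prIKH hJ0, hI, mul_sum]
  refine sum_congr rfl fun x _ => ?_
  by_cases hx : x i = a ∧ restr K x = u
  · rw [if_pos hx, if_pos hx, hJ.prXHY_eq, hx.1, hx.2]
  · rw [if_neg hx, if_neg hx, mul_zero]

theorem prYKH_none (hJ : IsSequentialMechanism p K J) (i : Fin n) (u : ↥K → X)
    (h : Fin n → Option X) :
    prYKH J K i i none u h = (1 - ∑ a : X, minC J K i i a h) * prKH J K i u h := by
  have htotal := sum_prYKH (J := J) i i u h
  rw [Fintype.sum_option] at htotal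
  simp only [hJ.prYKH_some, ← sum_mul] at htotal
  linarith

theorem exists_prKH_succ_eq_mul (hJ : IsSequentialMechanism p K J) (i : Fin n)
    (h : Fin n → Option X) : ∃ c : ℝ, ∀ u, prKH J K (i + 1) u h = c * prKH J K i u h := by
  have hstep : ∀ u, prKH J K (i + 1) u h = prYKH J K i i (h i) u h := fun u => by
    rw [prKH_eq_prob, prYKH_eq_prob]
    exact prob_congr fun x y _ => by rw [agreeN_succ_iff]; tauto
  cases hh : h i with
  | none => exact ⟨_, fun u => (hstep u).trans (hh ▸ hJ.prYKH_none i u h)⟩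
  | some a => exact ⟨_, fun u => (hstep u).trans (hh ▸ hJ.prYKH_some i a u h)⟩

theorem prKH_eq_mul_prH (hJ : IsSequentialMechanism p K J) (hp1 : ∑ x : Fin n → X, p x = 1)
    {t : ℕ} (ht : t ≤ n) (u : ↥K → X) (h : Fin n → Option X) :
    prKH J K t u h = (∑ x : Fin n → X, if restr K x = u then p x else 0) * prH J t h := by
  obtain ⟨-, hJp, -, -⟩ := id hJ
  induction t generalizing u with
  | zero =>
    have hH : prH J 0 h = 1 := by simp only [prH, prXH_zero, hJp, hp1]
    simp only [prKH_eq_sum_prXH, prXH_zero, hJp, hH, mul_one]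
  | succ t ih =>
    obtain ⟨c, hc⟩ := hJ.exists_prKH_succ_eq_mul ⟨t, ht⟩ h
    have hc' : ∀ v, prKH J K (t + 1) v h = c * prKH J K t v h := hc
    have hH : prH J (t + 1) h = c * prH J t h := by
      simp only [← sum_prKH (K := K), hc', ← mul_sum]
    rw [hc', ih (by omega), hH]
    ring

theorem restr_output_indep (hJ : IsSequentialMechanism p K J) (hp1 : ∑ x : Fin n → X, p x = 1)
    (u : ↥K → X) (y : Fin n → Option X) :
    (∑ x : Fin n → X, if restr K x = u then J x y else 0)
      = (∑ x : Fin n → X, if restr K x = u then p x else 0) * ∑ x : Fin n → X, J x y := by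
  have h := hJ.prKH_eq_mul_prH hp1 le_rfl u y
  simpa only [prKH_eq_sum_prXH, prH, prXH_length] using h

theorem prob_some_eq (hJ : IsSequentialMechanism p K J) (i : Fin n) (a : X) :
    prob J (fun _ y => y i = some a)
      = ∑ x : Fin n → X, ∑ y : Fin n → Option X, J x y * minC J K i i a y := by
  refine prob_eq_sum_mul_of_agreeN _ _ (fun y h hyh => minC_congr hyh i a) fun h => ?_
  rw [← prH_eq_prob, ← sum_prKH, mul_sum, ← sum_prob_eq_and (fun x _ => restr K x)]
  refine sum_congr rfl fun u _ => ?_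
  rw [← hJ.prYKH_some, prYKH_eq_prob]
  exact prob_congr fun x y _ => by tauto

theorem prob_none_eq (hJ : IsSequentialMechanism p K J) (hp1 : ∑ x : Fin n → X, p x = 1)
    (i : Fin n) :
    prob J (fun _ y => y i = none)
      = 1 - ∑ a : X, ∑ x : Fin n → X, ∑ y : Fin n → Option X, J x y * minC J K i i a y := by
  have htotal : ∑ b : Option X, prob J (fun _ y => y i = b) = 1 := by
    rw [← hp1]
    unfold prob
    rw [sum_comm]
    refine sum_congr rfl fun x _ => ?_
    rw [sum_comm, ← hJ.2.1 x]
    refine sum_congr rfl fun y _ => ?_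
    cases hy : y i <;> simp [hy]
  rw [Fintype.sum_option] at htotal
  simp only [hJ.prob_some_eq] at htotal
  linarith

theorem rate_eq (hJ : IsSequentialMechanism p K J) (hp1 : ∑ x : Fin n → X, p x = 1)
    (hn : 1 ≤ n) :
    1 - (1 / (n : ℝ)) * ∑ i : Fin n, prob J (fun _ y => y i = none)
      = (1 / (n : ℝ)) * ∑ i : Fin n, ∑ a : X,
          ∑ x : Fin n → X, ∑ y : Fin n → Option X, J x y * minC J K i i a y := by
  have hn' : (n : ℝ) ≠ 0 := by positivity
  simp only [hJ.prob_none_eq hp1, sum_sub_distrib, sum_const, card_univ, Fintype.card_fin,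
    nsmul_eq_mul, mul_one]
  field_simp
  ring

end IsSequentialMechanism

variable [Fintype X] [DecidableEq X]

/-- The expectation over the histories `Y_{[i]}` is written as a `J`-weighted sum over full
outputs `y`, as `minC J K i i a y` only depends on `y_{[i]}`. -/
theorem sequentialMechanism_rate_general {n : ℕ} (hn : 1 ≤ n)
    (p : (Fin n → X) → ℝ) (hp1 : ∑ x : Fin n → X, p x = 1)
    (K : Finset (Fin n))
    (J : (Fin n → X) → (Fin n → Option X) → ℝ)
    (hJ : IsSequentialMechanism p K J) :
    -- faithfulness
    (∀ x y, 0 < J x y → ∀ i : Fin n, y i = some (x i) ∨ y i = none) ∧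
    -- privacy: the joint law of (X_K, Y) factorizes
    (∀ (u : ↥K → X) (y : Fin n → Option X),
      (∑ x : Fin n → X, if restr K x = u then J x y else 0)
        = (∑ x : Fin n → X, if restr K x = u then p x else 0)
            * (∑ x : Fin n → X, J x y)) ∧
    -- the rate identity
    (1 - (1 / (n : ℝ)) * ∑ i : Fin n,
        (∑ x : Fin n → X, ∑ y : Fin n → Option X, if y i = none then J x y else 0)
      = (1 / (n : ℝ)) * ∑ i : Fin n, ∑ a : X,
          ∑ x : Fin n → X, ∑ y : Fin n → Option X, J x y * minC J K (i : ℕ) i a y) ∧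
    -- consequently every rate below this quantity is achievable
    (∀ R : ℝ,
      R ≤ (1 / (n : ℝ)) * ∑ i : Fin n, ∑ a : X,
            ∑ x : Fin n → X, ∑ y : Fin n → Option X, J x y * minC J K (i : ℕ) i a y →
      ∃ w : (Fin n → X) → (Fin n → Option X) → ℝ,
        (∀ x y, 0 ≤ w x y) ∧ (∀ x, ∑ y : Fin n → Option X, w x y = 1) ∧
        (∀ x y, 0 < w x y → ∀ i : Fin n, y i = some (x i) ∨ y i = none) ∧
        (∀ (u : ↥K → X) (y : Fin n → Option X),
          (∑ x : Fin n → X, if restr K x = u then p x * w x y else 0)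
            = (∑ x : Fin n → X, if restr K x = u then p x else 0)
                * ∑ x : Fin n → X, p x * w x y) ∧
        R ≤ 1 - (1 / (n : ℝ)) *
              ∑ x : Fin n → X, ∑ y : Fin n → Option X,
                p x * w x y * (numErasures y : ℝ)) := by
  obtain ⟨hJ0, hJp, hfaith, -⟩ := id hJ
  have hpriv := hJ.restr_output_indep hp1
  have hrate := hJ.rate_eq hp1 hn
  refine ⟨hfaith, hpriv, by simpa only [prob_eq_sum_ite] using hrate, fun R hR => ?_⟩
  obtain ⟨w, hw0, hw1, hpw, hwJ⟩ := exists_condKernel_of_joint J hJ0 (fun _ => none)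
  simp only [hJp] at hpw
  refine ⟨w, hw0, hw1, fun x y hxy i => ?_, fun u y => by simpa only [hpw] using hpriv u y, ?_⟩
  · rcases hwJ x y hxy with hJxy | rfl
    exacts [hfaith x y hJxy i, Or.inr rfl]
  · simp only [hpw, sum_mul_numErasures]
    linarith

/-- the sequential privacy mechanism is faithful and private, and its rate
satisfies `1 - (1/n) ∑_i P(Y_i = ∗) = (1/n) ∑_i ∑_a E_{Y_{[i-1]}}[ min_u P(X_i = a | X_K =
u, Y_{[i-1]}) ]` (the expectation over positive-probability histories being written as a
`J`-weighted sum, since `minC` depends on `y` only through its first `i` coordinates).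
Consequently, every rate `R` not exceeding this quantity is achievable by a faithful
private mechanism. -/
theorem sequentialMechanism_rate {n : ℕ} (hn : 1 ≤ n) (hX : 2 ≤ Fintype.card X)
    (p : (Fin n → X) → ℝ) (hp0 : ∀ x, 0 ≤ p x) (hp1 : ∑ x : Fin n → X, p x = 1)
    (K : Finset (Fin n))
    (J : (Fin n → X) → (Fin n → Option X) → ℝ)
    (hJ : IsSequentialMechanism p K J) :
    -- faithfulness
    (∀ x y, 0 < J x y → ∀ i : Fin n, y i = some (x i) ∨ y i = none) ∧
    -- privacy: the joint law of (X_K, Y) factorizes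
    (∀ (u : ↥K → X) (y : Fin n → Option X),
      (∑ x : Fin n → X, if restr K x = u then J x y else 0)
        = (∑ x : Fin n → X, if restr K x = u then p x else 0)
            * (∑ x : Fin n → X, J x y)) ∧
    -- the rate identity
    (1 - (1 / (n : ℝ)) * ∑ i : Fin n,
        (∑ x : Fin n → X, ∑ y : Fin n → Option X, if y i = none then J x y else 0)
      = (1 / (n : ℝ)) * ∑ i : Fin n, ∑ a : X,
          ∑ x : Fin n → X, ∑ y : Fin n → Option X, J x y * minC J K (i : ℕ) i a y) ∧
    -- consequently every rate below this quantity is achievable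
    (∀ R : ℝ,
      R ≤ (1 / (n : ℝ)) * ∑ i : Fin n, ∑ a : X,
            ∑ x : Fin n → X, ∑ y : Fin n → Option X, J x y * minC J K (i : ℕ) i a y →
      ∃ w : (Fin n → X) → (Fin n → Option X) → ℝ,
        (∀ x y, 0 ≤ w x y) ∧ (∀ x, ∑ y : Fin n → Option X, w x y = 1) ∧
        (∀ x y, 0 < w x y → ∀ i : Fin n, y i = some (x i) ∨ y i = none) ∧
        (∀ (u : ↥K → X) (y : Fin n → Option X),
          (∑ x : Fin n → X, if restr K x = u then p x * w x y else 0)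
            = (∑ x : Fin n → X, if restr K x = u then p x else 0)
                * ∑ x : Fin n → X, p x * w x y) ∧
        R ≤ 1 - (1 / (n : ℝ)) *
              ∑ x : Fin n → X, ∑ y : Fin n → Option X,
                p x * w x y * (numErasures y : ℝ)) :=
  sequentialMechanism_rate_general hn p hp1 K J hJ

end GenotypeHiding
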